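/- arXiv:1607.02990 — 2 statements merged into one kernel-verified Lean document; each statement's English description precedes it below -/
import Mathlib

section
/- Let d ≥ 2. There exists a constant C > 0 (depending only on d) such that for all t > 0 and all x, y ∈ ℝ^d₊: |∇_x H(x,y,t)| ≤ C H(x,y,t) [ t^{−1/2} (1 + |x−y|/√t) + 1/x_d ]. -/
open MeasureTheory Real Set

/-- One-dimensional Gaussian heat kernel `G_t(ξ) = (4πt)^{−1/2} e^{−ξ²/(4t)}`. -/
noncomputable def G1 (t ξ : ℝ) : ℝ := (4 * π * t) ^ (-(1 : ℝ) / 2) * Real.exp (-ξ ^ 2 / (4 * t))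

/-- `(d−1)`-dimensional Gaussian heat kernel (here `d = n+2`, so `d−1 = n+1`):
`G_t^{(d−1)}(v) = (4πt)^{−(d−1)/2} e^{−|v|²/(4t)}`. -/
noncomputable def Gtan (n : ℕ) (t : ℝ) (v : Fin (n + 1) → ℝ) : ℝ :=
  (4 * π * t) ^ (-((n : ℝ) + 1) / 2) * Real.exp (-(∑ i, (v i) ^ 2) / (4 * t))

/-- Half-space Dirichlet heat kernel in dimension `d = n+2`:
`H(x,y,t) = G_t^{(d−1)}(x'−y') (G_t(x_d−y_d) − G_t(x_d+y_d))`. -/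
noncomputable def H (n : ℕ) (t : ℝ) (x y : Fin (n + 2) → ℝ) : ℝ :=
  Gtan n t (fun i => x i.castSucc - y i.castSucc) *
    (G1 t (x (Fin.last (n + 1)) - y (Fin.last (n + 1))) -
      G1 t (x (Fin.last (n + 1)) + y (Fin.last (n + 1))))

/-! Tangential derivatives only see the Gaussian factor: `∂_j H = -(x_j - y_j)/(2t) · H`.
The normal derivative carries in addition the term `(y_d / t) G^{(d-1)} G_t(x_d + y_d)`, which
is at most `H / x_d` because
`G_t(x_d - y_d) = G_t(x_d + y_d) e^{x_d y_d / t} ≥ G_t(x_d + y_d) (1 + x_d y_d / t)`.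
So every partial derivative is at most `(|x - y| / (2t) + 1 / x_d) H`, and the gradient at
most `√d` times that. -/

lemma sqrt_sum_sq_le_sqrt_card_mul {ι : Type*} [Fintype ι] {f : ι → ℝ} {B : ℝ}
    (hB : 0 ≤ B) (hf : ∀ i, |f i| ≤ B) :
    √(∑ i, f i ^ 2) ≤ √(Fintype.card ι) * B := calc
  √(∑ i, f i ^ 2) ≤ √(∑ _i : ι, B ^ 2) :=
    sqrt_le_sqrt (Finset.sum_le_sum fun i _ => sq_le_sq.mpr ((hf i).trans (le_abs_self B)))
  _ = √(Fintype.card ι) * B := by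
    rw [Finset.sum_const, Finset.card_univ, nsmul_eq_mul, sqrt_mul (Nat.cast_nonneg _), sqrt_sq hB]

lemma div_two_mul_le_rpow_mul {t M : ℝ} (ht : 0 < t) (hM : 0 ≤ M) :
    M / (2 * t) ≤ t ^ (-(1 : ℝ) / 2) * (1 + M / √t) := by
  have hsqrt : t ^ (-(1 : ℝ) / 2) = (√t)⁻¹ := by
    rw [neg_div, rpow_neg ht.le, sqrt_eq_rpow]
  rw [hsqrt, mul_add, mul_one, inv_mul_eq_div, div_div, mul_self_sqrt ht.le]
  have : M / (2 * t) ≤ M / t := div_le_div_of_nonneg_left hM ht (by linarith)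
  have : 0 ≤ (√t)⁻¹ := by positivity
  linarith

lemma G1_pos {t : ℝ} (ht : 0 < t) (ξ : ℝ) : 0 < G1 t ξ := by
  unfold G1; positivity

lemma hasDerivAt_G1 (t ξ : ℝ) : HasDerivAt (G1 t) (-ξ / (2 * t) * G1 t ξ) ξ :=
  (((hasDerivAt_id' ξ).fun_pow 2).fun_neg.div_const (4 * t)).exp.const_mul
    ((4 * π * t) ^ (-(1 : ℝ) / 2)) |>.congr_deriv (by rw [G1]; ring)

lemma G1_sub_eq_mul_exp (t a b : ℝ) : G1 t (a - b) = G1 t (a + b) * exp (a * b / t) := by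
  rw [G1, G1, mul_assoc ((4 * π * t) ^ _), ← exp_add]
  ring_nf

lemma mul_G1_add_le_G1_sub_sub_G1_add {t : ℝ} (ht : 0 < t) (a b : ℝ) :
    a * b / t * G1 t (a + b) ≤ G1 t (a - b) - G1 t (a + b) := by
  have := mul_le_mul_of_nonneg_right (add_one_le_exp (a * b / t)) (G1_pos ht (a + b)).le
  rw [G1_sub_eq_mul_exp]
  linarith

lemma G1_add_lt_G1_sub {t a b : ℝ} (ht : 0 < t) (hab : 0 < a * b) :
    G1 t (a + b) < G1 t (a - b) := by
  have := mul_G1_add_le_G1_sub_sub_G1_add ht a b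
  have : 0 < a * b / t * G1 t (a + b) := by have := G1_pos ht (a + b); positivity
  linarith

lemma Gtan_pos (n : ℕ) {t : ℝ} (ht : 0 < t) (v : Fin (n + 1) → ℝ) : 0 < Gtan n t v := by
  unfold Gtan; positivity

lemma hasDerivAt_Gtan_update (n : ℕ) (t : ℝ) (v : Fin (n + 1) → ℝ) (j : Fin (n + 1)) :
    HasDerivAt (fun s => Gtan n t (Function.update v j s)) (-v j / (2 * t) * Gtan n t v) (v j) := by
  set R := ∑ i ∈ Finset.univ \ {j}, v i ^ 2
  have hsum (s : ℝ) : ∑ i, Function.update v j s i ^ 2 = s ^ 2 + R := by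
    rw [← Finset.sum_update_of_mem (Finset.mem_univ j) (fun i => v i ^ 2)]
    congr 1
    ext i
    rcases eq_or_ne i j with rfl | h <;> simp [*]
  have hfun : (fun s => Gtan n t (Function.update v j s)) =
      fun s => (4 * π * t) ^ (-((n : ℝ) + 1) / 2) * exp (-(s ^ 2 + R) / (4 * t)) := by
    funext s; rw [Gtan, hsum]
  rw [hfun, ← Function.update_eq_self j v, congrFun hfun, Function.update_eq_self]
  exact ((((hasDerivAt_id' (v j)).fun_pow 2).add_const R).fun_neg.div_const (4 * t)).exp.const_mul
    _ |>.congr_deriv (by ring)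

section HalfSpaceKernel

variable {n : ℕ} {t : ℝ} {x y : Fin (n + 2) → ℝ}

lemma H_pos (ht : 0 < t) (hx : 0 < x (Fin.last (n + 1))) (hy : 0 < y (Fin.last (n + 1))) :
    0 < H n t x y :=
  mul_pos (Gtan_pos n ht _) (sub_pos.mpr (G1_add_lt_G1_sub ht (mul_pos hx hy)))

lemma hasDerivAt_H_castSucc (j : Fin (n + 1)) :
    HasDerivAt (fun s => H n t (Function.update x j.castSucc s) y)
      (-(x j.castSucc - y j.castSucc) / (2 * t) * H n t x y) (x j.castSucc) := by
  set v : Fin (n + 1) → ℝ := fun i => x i.castSucc - y i.castSucc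
  have hv (s : ℝ) : (fun i => Function.update x j.castSucc s i.castSucc - y i.castSucc) =
      Function.update v j (s - y j.castSucc) := by
    ext i
    rcases eq_or_ne i j with rfl | h <;> simp [v, *]
  have hfun : (fun s => H n t (Function.update x j.castSucc s) y) = fun s =>
      Gtan n t (Function.update v j (s - y j.castSucc)) *
        (G1 t (x (Fin.last (n + 1)) - y (Fin.last (n + 1))) -
          G1 t (x (Fin.last (n + 1)) + y (Fin.last (n + 1)))) := by
    funext s
    simp only [H, hv, Function.update_of_ne (Fin.castSucc_lt_last j).ne']
  rw [hfun]
  exact ((hasDerivAt_Gtan_update n t v j).comp_sub_const _ _).mul_const _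
    |>.congr_deriv (by simp only [H, v]; ring)

lemma hasDerivAt_H_last :
    HasDerivAt (fun s => H n t (Function.update x (Fin.last (n + 1)) s) y)
      (-(x (Fin.last (n + 1)) - y (Fin.last (n + 1))) / (2 * t) * H n t x y +
        Gtan n t (fun i => x i.castSucc - y i.castSucc) *
          (y (Fin.last (n + 1)) / t * G1 t (x (Fin.last (n + 1)) + y (Fin.last (n + 1)))))
      (x (Fin.last (n + 1))) := by
  have hfun : (fun s => H n t (Function.update x (Fin.last (n + 1)) s) y) = fun s =>
      Gtan n t (fun i => x i.castSucc - y i.castSucc) *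
        (G1 t (s - y (Fin.last (n + 1))) - G1 t (s + y (Fin.last (n + 1)))) := by
    funext s
    simp only [H, Function.update_of_ne (Fin.castSucc_lt_last _).ne, Function.update_self]
  rw [hfun]
  exact (((hasDerivAt_G1 t _).comp_sub_const _ _).sub
    ((hasDerivAt_G1 t _).comp_add_const _ _)).const_mul _ |>.congr_deriv (by simp only [H]; ring)

lemma abs_deriv_H_le (ht : 0 < t) (hx : 0 < x (Fin.last (n + 1))) (hy : 0 < y (Fin.last (n + 1)))
    (i : Fin (n + 2)) :
    |deriv (fun s => H n t (Function.update x i s) y) (x i)| ≤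
      (|x i - y i| / (2 * t) + 1 / x (Fin.last (n + 1))) * H n t x y := by
  have hH := H_pos ht hx hy
  have hdrift (ξ : ℝ) : |-ξ / (2 * t) * H n t x y| = |ξ| / (2 * t) * H n t x y := by
    rw [abs_mul, abs_div, abs_neg, abs_of_pos (by positivity : 0 < 2 * t), abs_of_pos hH]
  induction i using Fin.lastCases with
  | last =>
    set a := x (Fin.last (n + 1))
    set b := y (Fin.last (n + 1))
    have himage : b / t * G1 t (a + b) ≤ (G1 t (a - b) - G1 t (a + b)) / a := by
      rw [le_div_iff₀ hx]
      linarith [mul_G1_add_le_G1_sub_sub_G1_add ht a b, show b / t * G1 t (a + b) * a =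
        a * b / t * G1 t (a + b) by ring]
    have hboundary : |Gtan n t (fun i => x i.castSucc - y i.castSucc) * (b / t * G1 t (a + b))| ≤
        1 / a * H n t x y := by
      have := G1_pos ht (a + b)
      have := Gtan_pos n ht (fun i => x i.castSucc - y i.castSucc)
      rw [abs_of_pos (by positivity), H, one_div_mul_eq_div, mul_div_assoc]
      gcongr
    rw [hasDerivAt_H_last.deriv, add_mul]
    exact (abs_add_le _ _).trans (add_le_add (hdrift _).le hboundary)
  | cast j =>
    rw [(hasDerivAt_H_castSucc j).deriv, hdrift, add_mul]
    have : 0 ≤ 1 / x (Fin.last (n + 1)) * H n t x y := by positivity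
    linarith

end HalfSpaceKernel

/-- For `d = n+2 ≥ 2` there is `C > 0` (depending only on `d`) such that for all
`t > 0` and all `x, y` in the half space:
`|∇_x H(x,y,t)| ≤ C H(x,y,t) [ t^{−1/2}(1 + |x−y|/√t) + 1/x_d ]`. -/
theorem stmt_4 (n : ℕ) :
    ∃ C : ℝ, 0 < C ∧ ∀ t : ℝ, 0 < t → ∀ x y : Fin (n + 2) → ℝ,
      0 < x (Fin.last (n + 1)) → 0 < y (Fin.last (n + 1)) →
      Real.sqrt (∑ i : Fin (n + 2),
          (deriv (fun s => H n t (Function.update x i s) y) (x i)) ^ 2) ≤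
        C * H n t x y *
          (t ^ (-(1 : ℝ) / 2) * (1 + Real.sqrt (∑ i, (x i - y i) ^ 2) / Real.sqrt t) +
            1 / x (Fin.last (n + 1))) := by
  refine ⟨√(n + 2), by positivity, fun t ht x y hx hy => ?_⟩
  set M := √(∑ i, (x i - y i) ^ 2)
  have hH := H_pos ht hx hy
  have hpartial (i : Fin (n + 2)) : |deriv (fun s => H n t (Function.update x i s) y) (x i)| ≤
      (M / (2 * t) + 1 / x (Fin.last (n + 1))) * H n t x y := by
    refine (abs_deriv_H_le ht hx hy i).trans ?_
    gcongr
    exact abs_le_sqrt (Finset.single_le_sum (f := fun i => (x i - y i) ^ 2)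
      (fun _ _ => sq_nonneg _) (Finset.mem_univ i))
  calc _ ≤ √(Fintype.card (Fin (n + 2))) *
          ((M / (2 * t) + 1 / x (Fin.last (n + 1))) * H n t x y) :=
        sqrt_sum_sq_le_sqrt_card_mul (by positivity) hpartial
    _ ≤ _ := by
      rw [Fintype.card_fin, mul_comm _ (H n t x y), ← mul_assoc]
      push_cast
      gcongr
      exact div_two_mul_le_rpow_mul ht (sqrt_nonneg _)
end

section
/- There exists an absolute constant C > 0 such that for every bounded measurable θ : ℝ²₊ → ℝ with θ ∈ L¹(ℝ²₊), every x ∈ ℝ²₊, and every 0 < δ ≤ L: | ∫_{ {y ∈ ℝ²₊ : max(|x₁−y₁|, |x₂−y₂|) ≥ δ} } ( |x−y|^{−3} − |x−ỹ|^{−3} ) (x₁ − y₁) θ(y) dy | ≤ C log(L/δ) ‖θ‖_{L^∞(ℝ²₊)} + C L^{−2} ‖θ‖_{L¹(ℝ²₊)}, where ỹ = (y₁, −y₂). -/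
/-!
Since `x₂, y₂ > 0` we have `|x − ỹ| ≥ |x − y|` and `|x₁ − y₁| ≤ |x − y|`, so the kernel is bounded
by `|x − y|⁻²`. On the truncated region `|x − y| ≥ max(|x₁ − y₁|, |x₂ − y₂|) ≥ δ`, split according
to `|x − y| ≤ L` or not. Near `x`, bound `θ` by its essential supremum and integrate `|x − y|⁻²`
over the annulus `δ ≤ |x − y| ≤ L` in polar coordinates, which gives `2π log (L / δ)`; away from
`x`, bound `|x − y|⁻²` by `L⁻²`. Hence `C = 2π` works.
-/

open MeasureTheory Real Set

/-- The squared Euclidean distance; the metric of `ℝ × ℝ` itself is the sup metric. -/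
def euclidSqDist (x y : ℝ × ℝ) : ℝ := (x.1 - y.1) ^ 2 + (x.2 - y.2) ^ 2

def euclidAnnulus (x : ℝ × ℝ) (r R : ℝ) : Set (ℝ × ℝ) :=
  {y | r ^ 2 ≤ euclidSqDist x y ∧ euclidSqDist x y ≤ R ^ 2}

noncomputable def halfPlaneKernel (x y : ℝ × ℝ) : ℝ :=
  (((x.1 - y.1) ^ 2 + (x.2 - y.2) ^ 2) ^ (-(3 : ℝ) / 2) -
    ((x.1 - y.1) ^ 2 + (x.2 + y.2) ^ 2) ^ (-(3 : ℝ) / 2)) * (x.1 - y.1)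

@[fun_prop]
lemma measurable_euclidSqDist (x : ℝ × ℝ) : Measurable (euclidSqDist x) := by
  unfold euclidSqDist; fun_prop

lemma measurableSet_euclidAnnulus (x : ℝ × ℝ) (r R : ℝ) :
    MeasurableSet (euclidAnnulus x r R) :=
  (measurableSet_le measurable_const (measurable_euclidSqDist x)).inter
    (measurableSet_le (measurable_euclidSqDist x) measurable_const)

lemma euclidSqDist_eq_euclidSqDist_zero_sub (x y : ℝ × ℝ) :
    euclidSqDist x y = euclidSqDist 0 (y - x) := by
  simp only [euclidSqDist, Prod.fst_zero, Prod.snd_zero, Prod.fst_sub, Prod.snd_sub]; ring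

lemma euclidSqDist_zero_polarCoord_symm (p : ℝ × ℝ) :
    euclidSqDist 0 (polarCoord.symm p) = p.1 ^ 2 := by
  simp only [euclidSqDist, polarCoord_symm_apply, Prod.fst_zero, Prod.snd_zero]
  linear_combination p.1 ^ 2 * sin_sq_add_cos_sq p.2

lemma sq_le_euclidSqDist_of_le_max {x y : ℝ × ℝ} {δ : ℝ} (hδ : 0 ≤ δ)
    (h : δ ≤ max |x.1 - y.1| |x.2 - y.2|) : δ ^ 2 ≤ euclidSqDist x y := by
  unfold euclidSqDist
  rcases le_max_iff.mp h with h | h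
  · nlinarith [sq_abs (x.1 - y.1), sq_nonneg (x.2 - y.2)]
  · nlinarith [sq_abs (x.2 - y.2), sq_nonneg (x.1 - y.1)]

lemma euclidAnnulus_subset_closedBall (x : ℝ × ℝ) (r R : ℝ) :
    euclidAnnulus x r R ⊆ Metric.closedBall x |R| := by
  rintro y ⟨-, hy⟩
  have h1 : (x.1 - y.1) ^ 2 ≤ R ^ 2 := by unfold euclidSqDist at hy; nlinarith
  have h2 : (x.2 - y.2) ^ 2 ≤ R ^ 2 := by unfold euclidSqDist at hy; nlinarith
  rw [sq_le_sq] at h1 h2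
  rw [Metric.mem_closedBall, Prod.dist_eq, Real.dist_eq, Real.dist_eq, abs_sub_comm y.1,
    abs_sub_comm y.2]
  exact max_le h1 h2

lemma abs_rpow_sub_rpow_mul_le_inv {A B c : ℝ} (hAB : A ≤ B) (hc : c ^ 2 ≤ A) :
    |(A ^ (-(3 : ℝ) / 2) - B ^ (-(3 : ℝ) / 2)) * c| ≤ A⁻¹ := by
  rcases (sq_nonneg c).trans hc |>.eq_or_lt with hA | hA
  · have hc0 : c = 0 := pow_eq_zero_iff two_ne_zero |>.mp (le_antisymm (hA ▸ hc) (sq_nonneg c))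
    simp [hc0, ← hA]
  have hB : B ^ (-(3 : ℝ) / 2) ≤ A ^ (-(3 : ℝ) / 2) :=
    rpow_le_rpow_of_nonpos hA hAB (by norm_num)
  have hcA : |c| ≤ A ^ (1 / 2 : ℝ) := by
    rw [← sqrt_eq_rpow, ← sqrt_sq_eq_abs]; exact sqrt_le_sqrt hc
  calc |(A ^ (-(3 : ℝ) / 2) - B ^ (-(3 : ℝ) / 2)) * c|
      = (A ^ (-(3 : ℝ) / 2) - B ^ (-(3 : ℝ) / 2)) * |c| := by
        rw [abs_mul, abs_of_nonneg (sub_nonneg.mpr hB)]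
    _ ≤ A ^ (-(3 : ℝ) / 2) * A ^ (1 / 2 : ℝ) := by
        gcongr
        linarith [rpow_nonneg (hA.le.trans hAB) (-(3 : ℝ) / 2)]
    _ = A⁻¹ := by rw [← rpow_add hA, ← rpow_neg_one]; norm_num

lemma abs_halfPlaneKernel_le {x y : ℝ × ℝ} (hx : 0 < x.2) (hy : 0 < y.2) :
    |halfPlaneKernel x y| ≤ (euclidSqDist x y)⁻¹ :=
  abs_rpow_sub_rpow_mul_le_inv (by nlinarith) (by nlinarith [sq_nonneg (x.2 - y.2)])

lemma ae_abs_le_toReal_eLpNorm_top {α : Type*} [MeasurableSpace α] {μ : Measure α}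
    {f : α → ℝ} {M : ℝ} (hM : ∀ y, |f y| ≤ M) :
    ∀ᵐ y ∂μ, |f y| ≤ (eLpNorm f ⊤ μ).toReal := by
  have hfin : eLpNorm f ⊤ μ ≠ ⊤ := by
    rw [eLpNorm_exponent_top]
    exact (eLpNormEssSup_lt_top_of_ae_bound (C := M) (.of_forall hM)).ne
  filter_upwards [ae_le_eLpNormEssSup (f := f) (μ := μ)] with y hy
  rw [← eLpNorm_exponent_top] at hy
  simpa using ENNReal.toReal_mono hfin hy

lemma integral_euclidAnnulus_zero {r R : ℝ} (hr : 0 < r) (hrR : r ≤ R) :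
    ∫ z in euclidAnnulus 0 r R, (euclidSqDist 0 z)⁻¹ = 2 * π * log (R / r) := by
  have hpolar : ∀ p ∈ polarCoord.target,
      p.1 • (euclidAnnulus 0 r R).indicator (fun z => (euclidSqDist 0 z)⁻¹) (polarCoord.symm p)
        = (Icc r R).indicator (fun s => s⁻¹) p.1 * 1 := by
    rintro ⟨s, φ⟩ ⟨hs, -⟩
    have hs : (0 : ℝ) < s := hs
    have hmem : polarCoord.symm (s, φ) ∈ euclidAnnulus 0 r R ↔ s ∈ Icc r R := by
      simp only [euclidAnnulus, mem_ofPred_eq, euclidSqDist_zero_polarCoord_symm, mem_Icc]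
      rw [pow_le_pow_iff_left₀ hr.le hs.le two_ne_zero,
        pow_le_pow_iff_left₀ hs.le (hr.trans_le hrR).le two_ne_zero]
    by_cases h : s ∈ Icc r R
    · rw [indicator_of_mem (hmem.mpr h), indicator_of_mem h,
        euclidSqDist_zero_polarCoord_symm, smul_eq_mul]
      field_simp
    · rw [indicator_of_notMem (mt hmem.mp h), indicator_of_notMem h]
      simp
  have hIcc : Icc r R ⊆ Ioi 0 := fun s hs => hr.trans_le hs.1
  rw [← integral_indicator (measurableSet_euclidAnnulus 0 r R),
    ← integral_comp_polarCoord_symm,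
    setIntegral_congr_fun polarCoord.open_target.measurableSet hpolar,
    show polarCoord.target = Ioi (0 : ℝ) ×ˢ Ioo (-π) π from rfl,
    Measure.volume_eq_prod, ← Measure.prod_restrict,
    integral_prod_mul (f := (Icc r R).indicator fun s => s⁻¹) (g := fun _ => (1 : ℝ)),
    integral_indicator measurableSet_Icc, Measure.restrict_restrict measurableSet_Icc,
    inter_eq_left.mpr hIcc, integral_Icc_eq_integral_Ioc, ← intervalIntegral.integral_of_le hrR,
    integral_inv (by rw [uIcc_of_le hrR]; exact fun h => hr.not_ge h.1), setIntegral_const,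
    Real.volume_real_Ioo_of_le (by linarith [pi_pos])]
  simp only [sub_neg_eq_add, smul_eq_mul, mul_one]; ring

lemma integral_euclidAnnulus (x : ℝ × ℝ) {r R : ℝ} (hr : 0 < r) (hrR : r ≤ R) :
    ∫ y in euclidAnnulus x r R, (euclidSqDist x y)⁻¹ = 2 * π * log (R / r) := by
  have htranslate : (euclidAnnulus x r R).indicator (fun y => (euclidSqDist x y)⁻¹) =
      fun y => (euclidAnnulus 0 r R).indicator (fun z => (euclidSqDist 0 z)⁻¹) (y - x) := by
    ext y
    simp only [indicator_apply, euclidAnnulus, mem_ofPred_eq,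
      euclidSqDist_eq_euclidSqDist_zero_sub x y]
  rw [← integral_indicator (measurableSet_euclidAnnulus x r R), htranslate,
    integral_sub_right_eq_self (fun z => (euclidAnnulus 0 r R).indicator _ z) x,
    integral_indicator (measurableSet_euclidAnnulus 0 r R), integral_euclidAnnulus_zero hr hrR]

lemma integrableOn_euclidAnnulus (x : ℝ × ℝ) {r : ℝ} (hr : 0 < r) (R : ℝ) :
    IntegrableOn (fun y => (euclidSqDist x y)⁻¹) (euclidAnnulus x r R) :=
  Measure.integrableOn_of_bounded
    ((Metric.isBounded_closedBall.subset (euclidAnnulus_subset_closedBall x r R)).measure_lt_top.ne)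
    (measurable_euclidSqDist x).inv.aestronglyMeasurable (M := (r ^ 2)⁻¹)
    (ae_restrict_of_forall_mem (measurableSet_euclidAnnulus x r R) fun y hy => by
      rw [norm_inv, Real.norm_of_nonneg ((sq_nonneg r).trans hy.1)]
      exact inv_anti₀ (by positivity) hy.1)

lemma inv_euclidSqDist_mul_le {x y : ℝ × ℝ} {δ L a m : ℝ} (hL : 0 < L)
    (hy : δ ^ 2 ≤ euclidSqDist x y) (ha : 0 ≤ a) (ham : a ≤ m) :
    (euclidSqDist x y)⁻¹ * a ≤
      m * (euclidAnnulus x δ L).indicator (fun y => (euclidSqDist x y)⁻¹) y + (L ^ 2)⁻¹ * a := by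
  have hd : 0 ≤ euclidSqDist x y := (sq_nonneg δ).trans hy
  by_cases hnear : euclidSqDist x y ≤ L ^ 2
  · rw [indicator_of_mem (show y ∈ euclidAnnulus x δ L from ⟨hy, hnear⟩)]
    nlinarith [mul_le_mul_of_nonneg_left ham (inv_nonneg.mpr hd), inv_nonneg.mpr (sq_nonneg L)]
  · rw [indicator_of_notMem fun h => hnear h.2, mul_zero, zero_add]
    gcongr
    exact le_of_not_ge hnear

lemma abs_halfPlaneKernel_mul_le {x y : ℝ × ℝ} {δ L t m : ℝ} (hx : 0 < x.2) (hy : 0 < y.2)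
    (hδ : 0 ≤ δ) (hyδ : δ ≤ max |x.1 - y.1| |x.2 - y.2|) (hL : 0 < L) (ht : |t| ≤ m) :
    |halfPlaneKernel x y * t| ≤
      m * (euclidAnnulus x δ L).indicator (fun y => (euclidSqDist x y)⁻¹) y + (L ^ 2)⁻¹ * |t| := by
  rw [abs_mul]
  exact (mul_le_mul_of_nonneg_right (abs_halfPlaneKernel_le hx hy) (abs_nonneg _)).trans
    (inv_euclidSqDist_mul_le hL (sq_le_euclidSqDist_of_le_max hδ hyδ) (abs_nonneg _) ht)

lemma setIntegral_indicator_euclidAnnulus_le (x : ℝ × ℝ) (s : Set (ℝ × ℝ)) {δ L : ℝ}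
    (hδ : 0 < δ) (hδL : δ ≤ L) :
    ∫ y in s, (euclidAnnulus x δ L).indicator (fun y => (euclidSqDist x y)⁻¹) y ≤
      2 * π * log (L / δ) := by
  rw [← integral_euclidAnnulus x hδ hδL, ← integral_indicator (measurableSet_euclidAnnulus x δ L)]
  exact setIntegral_le_integral
    ((integrableOn_euclidAnnulus x hδ L).integrable_indicator (measurableSet_euclidAnnulus x δ L))
    (.of_forall <| indicator_nonneg fun y hy => inv_nonneg.mpr ((sq_nonneg δ).trans hy.1))

lemma abs_setIntegral_halfPlaneKernel_mul_le {θ : ℝ × ℝ → ℝ} {M : ℝ} (hM : ∀ y, |θ y| ≤ M)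
    (hθ : IntegrableOn θ {y : ℝ × ℝ | 0 < y.2}) {x : ℝ × ℝ} (hx : 0 < x.2) {δ L : ℝ}
    (hδ : 0 < δ) (hδL : δ ≤ L) :
    |∫ y in {y : ℝ × ℝ | 0 < y.2 ∧ δ ≤ max |x.1 - y.1| |x.2 - y.2|}, halfPlaneKernel x y * θ y| ≤
      (eLpNorm θ ⊤ (volume.restrict {y : ℝ × ℝ | 0 < y.2})).toReal * (2 * π * log (L / δ)) +
        (L ^ 2)⁻¹ * ∫ y in {y : ℝ × ℝ | 0 < y.2}, |θ y| := by
  set P : Set (ℝ × ℝ) := {y | 0 < y.2}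
  set S : Set (ℝ × ℝ) := {y | 0 < y.2 ∧ δ ≤ max |x.1 - y.1| |x.2 - y.2|}
  set m := (eLpNorm θ ⊤ (volume.restrict P)).toReal
  set g : ℝ × ℝ → ℝ := (euclidAnnulus x δ L).indicator fun y => (euclidSqDist x y)⁻¹
  have hSP : S ⊆ P := fun y hy => hy.1
  have hSm : MeasurableSet S :=
    (measurableSet_lt measurable_const measurable_snd).inter
      (measurableSet_le measurable_const
        (by fun_prop : Measurable fun y : ℝ × ℝ => max |x.1 - y.1| |x.2 - y.2|))
  have hg : IntegrableOn g S :=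
    ((integrableOn_euclidAnnulus x hδ L).integrable_indicator
      (measurableSet_euclidAnnulus x δ L)).integrableOn
  have hθm : ∀ᵐ y ∂volume.restrict S, |θ y| ≤ m :=
    ae_restrict_of_ae_restrict_of_subset hSP (ae_abs_le_toReal_eLpNorm_top hM)
  have hpointwise : ∀ᵐ y ∂volume.restrict S,
      ‖halfPlaneKernel x y * θ y‖ ≤ m * g y + (L ^ 2)⁻¹ * |θ y| := by
    filter_upwards [hθm, ae_restrict_mem hSm] with y hθy ⟨hy, hyδ⟩
    exact abs_halfPlaneKernel_mul_le hx hy hδ.le hyδ (hδ.trans_le hδL) hθy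
  rw [← Real.norm_eq_abs]
  calc _ ≤ ∫ y in S, (m * g y + (L ^ 2)⁻¹ * |θ y|) :=
        norm_integral_le_of_norm_le ((hg.const_mul m).add
          ((hθ.mono_set hSP).abs.const_mul _)) hpointwise
    _ = m * (∫ y in S, g y) + (L ^ 2)⁻¹ * ∫ y in S, |θ y| := by
        rw [integral_add (hg.const_mul m) ((hθ.mono_set hSP).abs.const_mul _),
          integral_const_mul, integral_const_mul]
    _ ≤ m * (2 * π * log (L / δ)) + (L ^ 2)⁻¹ * ∫ y in P, |θ y| := by
        gcongr ?_ + (L ^ 2)⁻¹ * ?_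
        · exact mul_le_mul_of_nonneg_left (setIntegral_indicator_euclidAnnulus_le x S hδ hδL)
            ENNReal.toReal_nonneg
        · exact setIntegral_mono_set hθ.abs (.of_forall fun y => abs_nonneg _) hSP.eventuallyLE

/-- There is an absolute constant `C > 0` such that for every bounded
measurable `θ ∈ L¹(ℝ²₊)`, every `x ∈ ℝ²₊` and every `0 < δ ≤ L`:
`|∫_{max(|x₁−y₁|,|x₂−y₂|)≥δ, y₂>0} (|x−y|⁻³ − |x−ỹ|⁻³)(x₁−y₁) θ(y) dy|
  ≤ C log(L/δ) ‖θ‖_{L^∞(ℝ²₊)} + C L⁻² ‖θ‖_{L¹(ℝ²₊)}`, where `ỹ = (y₁,−y₂)`. -/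
theorem stmt_16 :
    ∃ C : ℝ, 0 < C ∧
      ∀ θ : ℝ × ℝ → ℝ, Measurable θ → (∃ M : ℝ, ∀ y : ℝ × ℝ, |θ y| ≤ M) →
      MeasureTheory.IntegrableOn θ {y : ℝ × ℝ | 0 < y.2} →
      ∀ x : ℝ × ℝ, 0 < x.2 → ∀ δ L : ℝ, 0 < δ → δ ≤ L →
      |∫ y in {y : ℝ × ℝ | 0 < y.2 ∧ δ ≤ max |x.1 - y.1| |x.2 - y.2|},
          (((x.1 - y.1) ^ 2 + (x.2 - y.2) ^ 2) ^ (-(3 : ℝ) / 2) -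
            ((x.1 - y.1) ^ 2 + (x.2 + y.2) ^ 2) ^ (-(3 : ℝ) / 2)) *
            (x.1 - y.1) * θ y|
        ≤ C * Real.log (L / δ) *
            (eLpNorm θ ⊤ (volume.restrict {y : ℝ × ℝ | 0 < y.2})).toReal +
          C * L ^ (-(2 : ℝ)) * ∫ y in {y : ℝ × ℝ | 0 < y.2}, |θ y| := by
  refine ⟨2 * π, by positivity, ?_⟩
  rintro θ - ⟨M, hM⟩ hθ x hx δ L hδ hδL
  have hbound := abs_setIntegral_halfPlaneKernel_mul_le hM hθ hx hδ hδL
  unfold halfPlaneKernel at hbound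
  have hm : 0 ≤ (eLpNorm θ ⊤ (volume.restrict {y : ℝ × ℝ | 0 < y.2})).toReal :=
    ENNReal.toReal_nonneg
  have hlog : 0 ≤ log (L / δ) := log_nonneg ((one_le_div hδ).mpr hδL)
  have hθP : 0 ≤ (L ^ 2)⁻¹ * ∫ y in {y : ℝ × ℝ | 0 < y.2}, |θ y| :=
    mul_nonneg (by positivity) (integral_nonneg fun y => abs_nonneg _)
  rw [rpow_neg (hδ.trans_le hδL).le, rpow_two]
  nlinarith [pi_gt_three]
end
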